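/- arXiv:1602.02220 — 4 statements merged into one kernel-verified Lean document; each statement's English description precedes it below -/
import Mathlib

section
/- Fix x, w ∈ ℝ^d and y ∈ {−1, +1}, and let ε ∈ ℝ^d be a random vector with E[ε_i] = 1 for every i (so E[x∘ε] = x). Let ℓ(z,y) = log(1 + exp(−y z)) be the logistic loss. Then, assuming all expectations below are finite, E_ε[ℓ(wᵀ(x∘ε), y)] = ℓ(wᵀx, y) + E_ε[ log( (exp(wᵀ(x∘ε)/2) + exp(−wᵀ(x∘ε)/2)) / (exp(wᵀx/2) + exp(−wᵀx/2)) ) ]. -/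
/-!
For `y = ±1` the logistic loss splits as `ℓ(z, y) = -y z / 2 + log (exp (z / 2) + exp (-z / 2))`:
a linear term plus an even term that no longer sees the label. Since `E[ε_i] = 1`, the linear
term has the same value at `wᵀx` as its expectation at `wᵀ(x∘ε)`, so the whole difference comes
from the even term, and that difference is the regularizer.
-/

open MeasureTheory Real

theorem log_one_add_exp_neg (t : ℝ) :
    log (1 + exp (-t)) = -t / 2 + log (exp (t / 2) + exp (-t / 2)) := by
  have hfactor : 1 + exp (-t) = exp (-t / 2) * (exp (t / 2) + exp (-t / 2)) := by
    rw [mul_add, ← exp_add, ← exp_add, show -t / 2 + t / 2 = 0 by ring,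
      show -t / 2 + -t / 2 = -t by ring, exp_zero, add_comm]
  rw [hfactor, log_mul (exp_ne_zero _) (by positivity), log_exp]

theorem log_one_add_exp_neg_mul_of_sign {y : ℝ} (hy : y = 1 ∨ y = -1) (z : ℝ) :
    log (1 + exp (-y * z)) = -y / 2 * z + log (exp (z / 2) + exp (-z / 2)) := by
  rw [neg_mul, log_one_add_exp_neg]
  rcases hy with rfl | rfl <;> ring_nf

theorem integral_comp_eq_comp_integral_add {Ω : Type*} [MeasurableSpace Ω] {μ : Measure Ω}
    [IsProbabilityMeasure μ] {S : Ω → ℝ} {f g : ℝ → ℝ} {c : ℝ} (hf : ∀ s, f s = c * s + g s)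
    (hS : Integrable S μ) (hfS : Integrable (fun ω => f (S ω)) μ) :
    ∫ ω, f (S ω) ∂μ = f (∫ ω, S ω ∂μ) + ∫ ω, (g (S ω) - g (∫ ω, S ω ∂μ)) ∂μ := by
  have hlin : Integrable (fun ω => c * S ω) μ := hS.const_mul c
  have hgS : Integrable (fun ω => g (S ω)) μ :=
    (hfS.sub hlin).congr (Filter.Eventually.of_forall fun ω => by simp only [hf, Pi.sub_apply]; ring)
  calc ∫ ω, f (S ω) ∂μ = ∫ ω, (c * S ω + g (S ω)) ∂μ := by simp only [hf]
    _ = c * ∫ ω, S ω ∂μ + ∫ ω, g (S ω) ∂μ := by rw [integral_add hlin hgS, integral_const_mul]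
    _ = f (∫ ω, S ω ∂μ) + ∫ ω, (g (S ω) - g (∫ ω, S ω ∂μ)) ∂μ := by
      rw [integral_sub hgS (integrable_const _), hf, integral_const, probReal_univ, one_smul]
      ring

section Dropout

variable {ι Ω : Type*} [Fintype ι] [MeasurableSpace Ω] {μ : Measure Ω} {ε : Ω → ι → ℝ}

theorem integrable_sum_mul_mul_noise (hε : ∀ i, Integrable (fun ω => ε ω i) μ) (w x : ι → ℝ) :
    Integrable (fun ω => ∑ i, w i * (x i * ε ω i)) μ :=
  integrable_finsetSum _ fun i _ => ((hε i).const_mul (x i)).const_mul (w i)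

theorem integral_sum_mul_mul_noise (hε : ∀ i, Integrable (fun ω => ε ω i) μ)
    (hε1 : ∀ i, ∫ ω, ε ω i ∂μ = 1) (w x : ι → ℝ) :
    ∫ ω, ∑ i, w i * (x i * ε ω i) ∂μ = ∑ i, w i * x i := by
  rw [integral_finsetSum _ fun i _ => ((hε i).const_mul (x i)).const_mul (w i)]
  simp only [integral_const_mul, hε1, mul_one]

end Dropout

theorem dropout_logistic_regularizer_identity_general {d : ℕ}
    {Ω : Type*} [MeasurableSpace Ω] (μ : Measure Ω) [IsProbabilityMeasure μ]
    (x w : Fin d → ℝ) (y : ℝ) (hy : y = 1 ∨ y = -1)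
    (ε : Ω → Fin d → ℝ)
    (hεint : ∀ i, Integrable (fun ω => ε ω i) μ)
    (hε1 : ∀ i, ∫ ω, ε ω i ∂μ = 1)
    (ℓ : ℝ → ℝ → ℝ) (hℓ : ∀ z y', ℓ z y' = Real.log (1 + Real.exp (-y' * z)))
    (hint1 : Integrable (fun ω => ℓ (∑ i, w i * (x i * ε ω i)) y) μ) :
    ∫ ω, ℓ (∑ i, w i * (x i * ε ω i)) y ∂μ =
      ℓ (∑ i, w i * x i) y +
      ∫ ω, Real.log ((Real.exp ((∑ i, w i * (x i * ε ω i)) / 2) +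
          Real.exp (-(∑ i, w i * (x i * ε ω i)) / 2)) /
        (Real.exp ((∑ i, w i * x i) / 2) + Real.exp (-(∑ i, w i * x i) / 2))) ∂μ := by
  have hdecomp := integral_comp_eq_comp_integral_add (c := -y / 2)
    (g := fun s => log (exp (s / 2) + exp (-s / 2)))
    (fun s => (hℓ s y).trans (log_one_add_exp_neg_mul_of_sign hy s))
    (integrable_sum_mul_mul_noise hεint w x) hint1
  rw [hdecomp, integral_sum_mul_mul_noise hεint hε1]
  congr 1
  refine integral_congr_ae (Filter.Eventually.of_forall fun ω => ?_)
  exact (log_div (by positivity) (by positivity)).symm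

/-- for the logistic loss `ℓ(z,y) = log(1 + exp(-y z))`, labels `y ∈ {-1,1}`,
and dropout noise `ε` with `E[ε i] = 1`, the marginalized dropout loss decomposes as the
plain loss plus the data-dependent regularizer. -/
theorem dropout_logistic_regularizer_identity {d : ℕ}
    {Ω : Type*} [MeasurableSpace Ω] (μ : Measure Ω) [IsProbabilityMeasure μ]
    (x w : Fin d → ℝ) (y : ℝ) (hy : y = 1 ∨ y = -1)
    (ε : Ω → Fin d → ℝ)
    (hεint : ∀ i, Integrable (fun ω => ε ω i) μ)
    (hε1 : ∀ i, ∫ ω, ε ω i ∂μ = 1)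
    (ℓ : ℝ → ℝ → ℝ) (hℓ : ∀ z y', ℓ z y' = Real.log (1 + Real.exp (-y' * z)))
    (hint1 : Integrable (fun ω => ℓ (∑ i, w i * (x i * ε ω i)) y) μ)
    (hint2 : Integrable (fun ω =>
      Real.log ((Real.exp ((∑ i, w i * (x i * ε ω i)) / 2) +
          Real.exp (-(∑ i, w i * (x i * ε ω i)) / 2)) /
        (Real.exp ((∑ i, w i * x i) / 2) + Real.exp (-(∑ i, w i * x i) / 2)))) μ) :
    ∫ ω, ℓ (∑ i, w i * (x i * ε ω i)) y ∂μ =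
      ℓ (∑ i, w i * x i) y +
      ∫ ω, Real.log ((Real.exp ((∑ i, w i * (x i * ε ω i)) / 2) +
          Real.exp (-(∑ i, w i * (x i * ε ω i)) / 2)) /
        (Real.exp ((∑ i, w i * x i) / 2) + Real.exp (-(∑ i, w i * x i) / 2))) ∂μ :=
  dropout_logistic_regularizer_identity_general μ x w y hy ε hεint hε1 ℓ hℓ hint1
end

section
/- Let x ∈ ℝ^d be a random vector with 0 < E[x_i²] < ∞ for every i, and for probabilities p = (p_1,…,p_d) with p_i > 0 and Σ p_i = 1 let ε(p) be the multinomial dropout noise with parameters (p; k), independent of x. Then the probabilities p_i* = √(E[x_i²]) / Σ_{j=1}^d √(E[x_j²]) minimize the map p ↦ E[‖x∘ε(p)‖₂²] over the open probability simplex; i.e., for every such p, E[‖x∘ε(p*)‖₂²] ≤ E[‖x∘ε(p)‖₂²]. -/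
open MeasureTheory ProbabilityTheory

/-!
Writing the count `m_i = ∑_j 1{T_j = i}` and expanding the square, pairwise independence of the
trials gives `E[m_i²] = k p_i + k (k - 1) p_i²`; independence of `x` and the noise then yields
`E‖x∘ε(p)‖² = (1/k) ∑ a_i / p_i + ((k - 1)/k) ∑ a_i` with `a_i = E[x_i²]`. Only the first sum
depends on `p`, and by Cauchy–Schwarz (Sedrakyan's form)
`∑ a_i / p_i ≥ (∑ √a_i)² / ∑ p_i = (∑ √a_i)²`, which is the value of `∑ a_i / p_i` at
`p_i = √a_i / ∑ √a_j`.
-/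

open Finset

theorem natCast_card_filter_eq_sum_indicator {Ω ι α : Type*} [Fintype ι] [DecidableEq α]
    (T : ι → Ω → α) (a : α) (ω : Ω) :
    (#{j | T j ω = a} : ℝ) = ∑ j, {ω | T j ω = a}.indicator 1 ω := by
  rw [Finset.natCast_card_filter]
  simp only [Set.indicator_apply, Set.mem_ofPred_eq, Pi.one_apply]

section Moments

variable {Ω : Type*} [MeasurableSpace Ω] {μ : Measure Ω}

theorem integral_sq_sum_indicator_one {ι : Type*} [Fintype ι] [IsFiniteMeasure μ]
    {A : ι → Set Ω} (hA : ∀ j, MeasurableSet (A j))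
    (hindep : Pairwise fun j j' => IndepSet (A j) (A j') μ) {q : ℝ}
    (hq : ∀ j, μ.real (A j) = q) :
    ∫ ω, (∑ j, (A j).indicator 1 ω) ^ 2 ∂μ =
      Fintype.card ι * q + Fintype.card ι * (Fintype.card ι - 1) * q ^ 2 := by
  classical
  have hinter : ∀ j j', μ.real (A j ∩ A j') = if j = j' then q else q ^ 2 := by
    intro j j'
    split_ifs with h
    · rw [h, Set.inter_self, hq]
    · rw [measureReal_def, (hindep h).measure_inter_eq_mul, ENNReal.toReal_mul,
        ← measureReal_def, ← measureReal_def, hq, hq, sq]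
  have hexpand : ∀ ω, (∑ j, (A j).indicator (1 : Ω → ℝ) ω) ^ 2 =
      ∑ j, ∑ j', (A j ∩ A j').indicator 1 ω := by
    intro ω
    simp only [sq, sum_mul_sum, Set.inter_indicator_one, Pi.mul_apply]
  have hint : ∀ j j', Integrable ((A j ∩ A j').indicator (1 : Ω → ℝ)) μ := fun j j' =>
    (integrable_const 1).indicator ((hA j).inter (hA j'))
  simp_rw [hexpand]
  rw [integral_finsetSum _ fun j _ => integrable_finsetSum _ fun j' _ => hint j j']
  simp_rw [integral_finsetSum _ fun j' _ => hint _ j', integral_indicator_one ((hA _).inter (hA _)),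
    hinter]
  have hsplit : ∀ j j' : ι,
      (if j = j' then q else q ^ 2) = q ^ 2 + if j = j' then q - q ^ 2 else 0 :=
    fun j j' => by split_ifs <;> ring
  simp only [hsplit, sum_add_distrib, sum_ite_eq, mem_univ, if_true, sum_const, card_univ,
    nsmul_eq_mul]
  ring

theorem integral_sq_natCast_card_filter_eq [IsProbabilityMeasure μ] {ι α : Type*} [Fintype ι]
    [DecidableEq α] [MeasurableSpace α] [MeasurableSingletonClass α]
    {T : ι → Ω → α} (hT : ∀ j, Measurable (T j))
    (hindep : Pairwise fun j j' => IndepFun (T j) (T j') μ) {a : α} {q : ℝ}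
    (hq : ∀ j, μ.real {ω | T j ω = a} = q) :
    ∫ ω, (#{j | T j ω = a} : ℝ) ^ 2 ∂μ =
      Fintype.card ι * q + Fintype.card ι * (Fintype.card ι - 1) * q ^ 2 := by
  simp_rw [natCast_card_filter_eq_sum_indicator]
  refine integral_sq_sum_indicator_one (fun j => hT j (measurableSet_singleton a))
    (fun j j' h => ?_) hq
  exact (indepFun_iff_indepSet_preimage (hT j) (hT j')).1 (hindep h) _ _
    (measurableSet_singleton a) (measurableSet_singleton a)

theorem integral_sum_sq_mul_dropout [IsProbabilityMeasure μ] {ι : Type*} [Fintype ι]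
    [DecidableEq ι] [MeasurableSpace ι] [MeasurableSingletonClass ι] {k : ℕ}
    {X : Ω → ι → ℝ} (hX : ∀ i, Integrable (fun ω => X ω i ^ 2) μ)
    {p : ι → ℝ} (hp : ∀ i, 0 < p i)
    {T : Fin k → Ω → ι} (hT : ∀ j, Measurable (T j))
    (hindep : Pairwise fun j j' => IndepFun (T j) (T j') μ)
    (hdist : ∀ j i, μ.real {ω | T j ω = i} = p i)
    (hXT : IndepFun X (fun ω j => T j ω) μ) :
    ∫ ω, ∑ i, (X ω i * ((#{j | T j ω = i} : ℝ) / (k * p i))) ^ 2 ∂μ =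
      1 / k * ∑ i, (∫ ω, X ω i ^ 2 ∂μ) / p i + (k - 1) / k * ∑ i, ∫ ω, X ω i ^ 2 ∂μ := by
  set count : ι → Ω → ℝ := fun i ω => #{j | T j ω = i}
  have hcount_meas : ∀ i, Measurable fun t : Fin k → ι => (#{j | t j = i} : ℝ) ^ 2 :=
    fun i => measurable_of_countable _
  have hcount_indep : ∀ i, IndepFun (fun ω => X ω i ^ 2) (fun ω => count i ω ^ 2) μ := fun i =>
    hXT.comp ((measurable_pi_apply i).pow_const 2) (hcount_meas i)
  have hcount_int : ∀ i, Integrable (fun ω => count i ω ^ 2) μ := by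
    intro i
    refine .of_bound (C := (k : ℝ) ^ 2) ?_ (.of_forall fun ω => ?_)
    · exact ((hcount_meas i).comp (measurable_pi_lambda _ hT)).aestronglyMeasurable
    · rw [Real.norm_of_nonneg (sq_nonneg _)]
      gcongr
      exact Nat.cast_le.2 ((card_filter_le univ _).trans_eq (card_fin k))
  have hterm : ∀ i, (fun ω => (X ω i * (count i ω / (k * p i))) ^ 2) =
      fun ω => X ω i ^ 2 * count i ω ^ 2 / (k * p i) ^ 2 := fun i => funext fun ω => by ring
  have hterm_int : ∀ i, Integrable (fun ω => (X ω i * (count i ω / (k * p i))) ^ 2) μ := fun i =>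
    hterm i ▸ ((hcount_indep i).integrable_mul (hX i) (hcount_int i)).div_const _
  rw [integral_finsetSum _ fun i _ => hterm_int i, mul_sum, mul_sum, ← sum_add_distrib]
  refine sum_congr rfl fun i _ => ?_
  rw [hterm i, integral_div, (hcount_indep i).integral_fun_mul_eq_mul_integral
    (hX i).aestronglyMeasurable (hcount_int i).aestronglyMeasurable,
    integral_sq_natCast_card_filter_eq hT hindep (hdist · i), Fintype.card_fin]
  have hpi := (hp i).ne'
  rcases Nat.eq_zero_or_pos k with rfl | hk
  · simp -- for `k = 0` both sides vanish, since `x / 0 = 0`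
  · field_simp

end Moments

theorem sq_sum_sqrt_le_sum_div {ι : Type*} (s : Finset ι) {a p : ι → ℝ} (ha : ∀ i ∈ s, 0 ≤ a i)
    (hp : ∀ i ∈ s, 0 < p i) (hsum : ∑ i ∈ s, p i = 1) :
    (∑ i ∈ s, √(a i)) ^ 2 ≤ ∑ i ∈ s, a i / p i := by
  have h := sq_sum_div_le_sum_sq_div s (fun i => √(a i)) hp
  rw [hsum, div_one] at h
  exact h.trans_eq (sum_congr rfl fun i hi => by rw [Real.sq_sqrt (ha i hi)])

theorem sum_div_sqrt_div_sum_sqrt {ι : Type*} (s : Finset ι) (a : ι → ℝ) :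
    ∑ i ∈ s, a i / (√(a i) / ∑ j ∈ s, √(a j)) = (∑ i ∈ s, √(a i)) ^ 2 := by
  simp_rw [div_div_eq_mul_div, mul_div_right_comm, Real.div_sqrt, ← sum_mul, sq]

theorem multinomial_dropout_optimal_probabilities_general {d k : ℕ}
    {Ω : Type*} [MeasurableSpace Ω] (μ : Measure Ω) [IsProbabilityMeasure μ]
    (X : Ω → Fin d → ℝ)
    (hXint : ∀ i, Integrable (fun ω => (X ω i) ^ 2) μ)
    (hXpos : ∀ i, 0 < ∫ ω, (X ω i) ^ 2 ∂μ)
    -- an arbitrary point `p` of the open probability simplex and its multinomial noise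
    (p : Fin d → ℝ) (hp : ∀ i, 0 < p i) (hpsum : ∑ i, p i = 1)
    (T : Fin k → Ω → Fin d) (hTmeas : ∀ j, Measurable (T j))
    (hTindep : iIndepFun T μ)
    (hTdist : ∀ j i, μ {ω | T j ω = i} = ENNReal.ofReal (p i))
    (hXTindep : IndepFun X (fun ω j => T j ω) μ)
    (m : Fin d → Ω → ℕ)
    (hm : ∀ i ω, m i ω = (Finset.univ.filter (fun j => T j ω = i)).card)
    -- the optimal probabilities `p*` and their multinomial noise
    (pstar : Fin d → ℝ)
    (hpstar : ∀ i, pstar i =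
      Real.sqrt (∫ ω, (X ω i) ^ 2 ∂μ) / ∑ j, Real.sqrt (∫ ω, (X ω j) ^ 2 ∂μ))
    (S : Fin k → Ω → Fin d) (hSmeas : ∀ j, Measurable (S j))
    (hSindep : iIndepFun S μ)
    (hSdist : ∀ j i, μ {ω | S j ω = i} = ENNReal.ofReal (pstar i))
    (hXSindep : IndepFun X (fun ω j => S j ω) μ)
    (mstar : Fin d → Ω → ℕ)
    (hmstar : ∀ i ω, mstar i ω = (Finset.univ.filter (fun j => S j ω = i)).card) :
    ∫ ω, ∑ i, (X ω i * ((mstar i ω : ℝ) / (k * pstar i))) ^ 2 ∂μ ≤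
      ∫ ω, ∑ i, (X ω i * ((m i ω : ℝ) / (k * p i))) ^ 2 ∂μ := by
  obtain rfl : m = _ := funext₂ hm
  obtain rfl : mstar = _ := funext₂ hmstar
  have hpstar_pos : ∀ i, 0 < pstar i := fun i => by
    rw [hpstar]
    exact div_pos (Real.sqrt_pos.2 (hXpos i)) <| (Real.sqrt_pos.2 (hXpos i)).trans_le <|
      single_le_sum (f := fun j => √(∫ ω, X ω j ^ 2 ∂μ)) (fun j _ => Real.sqrt_nonneg _)
        (mem_univ i)
  have hreal {q : Fin d → ℝ} (hq : ∀ i, 0 < q i) {U : Fin k → Ω → Fin d}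
      (hU : ∀ j i, μ {ω | U j ω = i} = ENNReal.ofReal (q i)) (j i) :
      μ.real {ω | U j ω = i} = q i := by
    rw [measureReal_def, hU, ENNReal.toReal_ofReal (hq i).le]
  rw [integral_sum_sq_mul_dropout hXint hp hTmeas (fun _ _ h => hTindep.indepFun h)
      (hreal hp hTdist) hXTindep,
    integral_sum_sq_mul_dropout hXint hpstar_pos hSmeas (fun _ _ h => hSindep.indepFun h)
      (hreal hpstar_pos hSdist) hXSindep]
  gcongr 1 / _ * ?_ + _
  rw [funext hpstar, sum_div_sqrt_div_sum_sqrt]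
  exact sq_sum_sqrt_le_sum_div _ (fun i _ => (hXpos i).le) (fun i _ => hp i) hpsum

/-- the probabilities `p* i = √(E[x i ^ 2]) / Σ_j √(E[x j ^ 2])` minimize
`p ↦ E[‖x ∘ ε(p)‖₂²]` over the open probability simplex, where `ε(p)` is the multinomial
dropout noise with parameters `(p; k)` independent of `x`. -/
theorem multinomial_dropout_optimal_probabilities {d k : ℕ} (hk : 1 ≤ k)
    {Ω : Type*} [MeasurableSpace Ω] (μ : Measure Ω) [IsProbabilityMeasure μ]
    (X : Ω → Fin d → ℝ) (hXmeas : Measurable X)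
    (hXint : ∀ i, Integrable (fun ω => (X ω i) ^ 2) μ)
    (hXpos : ∀ i, 0 < ∫ ω, (X ω i) ^ 2 ∂μ)
    -- an arbitrary point `p` of the open probability simplex and its multinomial noise
    (p : Fin d → ℝ) (hp : ∀ i, 0 < p i) (hpsum : ∑ i, p i = 1)
    (T : Fin k → Ω → Fin d) (hTmeas : ∀ j, Measurable (T j))
    (hTindep : iIndepFun T μ)
    (hTdist : ∀ j i, μ {ω | T j ω = i} = ENNReal.ofReal (p i))
    (hXTindep : IndepFun X (fun ω j => T j ω) μ)
    (m : Fin d → Ω → ℕ)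
    (hm : ∀ i ω, m i ω = (Finset.univ.filter (fun j => T j ω = i)).card)
    -- the optimal probabilities `p*` and their multinomial noise
    (pstar : Fin d → ℝ)
    (hpstar : ∀ i, pstar i =
      Real.sqrt (∫ ω, (X ω i) ^ 2 ∂μ) / ∑ j, Real.sqrt (∫ ω, (X ω j) ^ 2 ∂μ))
    (S : Fin k → Ω → Fin d) (hSmeas : ∀ j, Measurable (S j))
    (hSindep : iIndepFun S μ)
    (hSdist : ∀ j i, μ {ω | S j ω = i} = ENNReal.ofReal (pstar i))
    (hXSindep : IndepFun X (fun ω j => S j ω) μ)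
    (mstar : Fin d → Ω → ℕ)
    (hmstar : ∀ i ω, mstar i ω = (Finset.univ.filter (fun j => S j ω = i)).card) :
    ∫ ω, ∑ i, (X ω i * ((mstar i ω : ℝ) / (k * pstar i))) ^ 2 ∂μ ≤
      ∫ ω, ∑ i, (X ω i * ((m i ω : ℝ) / (k * p i))) ^ 2 ∂μ :=
  multinomial_dropout_optimal_probabilities_general μ X hXint hXpos p hp hpsum T hTmeas hTindep
    hTdist hXTindep m hm pstar hpstar S hSmeas hSindep hSdist hXSindep mstar hmstar
end

section
/- Let x ∈ ℝ^d be a random vector with E[x_i²] < ∞ for every i, let ε be the multinomial dropout noise with parameters (p_1,…,p_d; k) independent of x, and let q(z) = 1/(1 + exp(−z/2)). Define the approximate dropout regularizer R̂(w) = (1/2)·E_x[ q(wᵀx)(1 − q(wᵀx)) · Var_ε(wᵀ(x∘ε)) ]. Then for every w ∈ ℝ^d, R̂(w) ≤ (1/(8k))·‖w‖₂²·( Σ_{i=1}^d E[x_i²]/p_i − E[‖x‖₂²] ). -/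
/-!
Write `ε i = m i / (k p i)`. Cauchy–Schwarz applied pointwise to the centred variables gives
`Var (∑ wᵢ xᵢ εᵢ) ≤ ‖w‖² ∑ xᵢ² Var εᵢ`: the largest eigenvalue of the covariance of `x ∘ ε` is
relaxed to its trace. Each count `m i` is a sum of `k` independent Bernoulli(`p i`) indicators, so
`Var εᵢ = (1 - p i) / (k p i)`, and `∑ xᵢ² (1 - p i) / p i = ∑ xᵢ² / p i - ‖x‖²`. Since
`q (1 - q) ≤ 1/4`, integrating over `x` yields the constant `1 / (8k)`.
-/

open MeasureTheory ProbabilityTheory Finset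

theorem Real.sigmoid_mul_one_sub_sigmoid_mem_Icc (x : ℝ) :
    sigmoid x * (1 - sigmoid x) ∈ Set.Icc 0 (1 / 4) := by
  have h0 := sigmoid_nonneg x
  have h1 := sigmoid_le_one x
  exact ⟨by nlinarith, by nlinarith [sq_nonneg (sigmoid x - 1 / 2)]⟩

section Variance

variable {Ω : Type*} [MeasurableSpace Ω] {μ : Measure Ω}

theorem variance_sum_mul_le {ι : Type*} [Fintype ι] [IsFiniteMeasure μ] {Y : ι → Ω → ℝ}
    (hY : ∀ i, MemLp (Y i) 2 μ) (w : ι → ℝ) :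
    Var[fun ω => ∑ i, w i * Y i ω; μ] ≤ (∑ i, w i ^ 2) * ∑ i, Var[Y i; μ] := by
  have hS : AEMeasurable (fun ω => ∑ i, w i * Y i ω) μ :=
    Finset.aemeasurable_fun_sum _ fun i _ => ((hY i).aemeasurable.const_mul (w i))
  have hcentred : ∀ i, Integrable (fun ω => (Y i ω - μ[Y i]) ^ 2) μ := fun i =>
    ((hY i).sub (memLp_const _)).integrable_sq
  have hmean : μ[fun ω => ∑ i, w i * Y i ω] = ∑ i, w i * μ[Y i] := by
    rw [integral_finsetSum _ fun i _ => ((hY i).integrable one_le_two).const_mul (w i)]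
    simp_rw [integral_const_mul]
  simp_rw [variance_eq_integral hS, hmean, variance_eq_integral (hY _).aemeasurable]
  rw [← integral_finsetSum _ fun i _ => hcentred i, ← integral_const_mul]
  refine integral_mono_of_nonneg (.of_forall fun ω => sq_nonneg _)
    ((integrable_finsetSum _ fun i _ => hcentred i).const_mul _) (.of_forall fun ω => ?_)
  calc (∑ i, w i * Y i ω - ∑ i, w i * μ[Y i]) ^ 2
      = (∑ i, w i * (Y i ω - μ[Y i])) ^ 2 := by simp only [mul_sub, sum_sub_distrib]
    _ ≤ (∑ i, w i ^ 2) * ∑ i, (Y i ω - μ[Y i]) ^ 2 := sum_mul_sq_le_sq_mul_sq _ _ _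
    _ = _ := by simp only [mul_sum]

theorem variance_indicator_one [IsProbabilityMeasure μ] {s : Set Ω} (hs : MeasurableSet s) :
    Var[s.indicator 1; μ] = μ.real s * (1 - μ.real s) := by
  rw [variance_eq_sub (X := s.indicator 1)
    (memLp_indicator_const 2 hs 1 (Or.inr (measure_ne_top μ s)))]
  have hsq : s.indicator (1 : Ω → ℝ) ^ 2 = s.indicator 1 := by
    ext ω; by_cases h : ω ∈ s <;> simp [h]
  rw [hsq, integral_indicator_one hs]
  ring

theorem measurable_card_filter_eq {ι α : Type*} [Fintype ι] [Countable α] [MeasurableSpace α]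
    [MeasurableSingletonClass α] [DecidableEq α] {T : ι → Ω → α} (hT : ∀ j, Measurable (T j))
    (a : α) : Measurable fun ω => (#{j | T j ω = a} : ℝ) :=
  (measurable_of_countable fun t : ι → α => (#{j | t j = a} : ℝ)).comp (measurable_pi_lambda _ hT)

theorem variance_card_filter_eq {ι α : Type*} [Fintype ι] [MeasurableSpace α]
    [MeasurableSingletonClass α] [DecidableEq α] [IsProbabilityMeasure μ] {T : ι → Ω → α}
    (hT : ∀ j, Measurable (T j)) (hindep : iIndepFun T μ) {a : α} {r : ℝ}
    (hr : ∀ j, μ.real (T j ⁻¹' {a}) = r) :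
    Var[fun ω => (#{j | T j ω = a} : ℝ); μ] = Fintype.card ι * (r * (1 - r)) := by
  set X : ι → Ω → ℝ := fun j => (T j ⁻¹' {a}).indicator 1
  have hmeas : ∀ j, MeasurableSet (T j ⁻¹' {a}) := fun j => hT j (measurableSet_singleton a)
  have hcount : (fun ω => (#{j | T j ω = a} : ℝ)) = ∑ j, X j := by
    ext ω
    rw [Finset.natCast_card_filter, Finset.sum_apply]
    refine Finset.sum_congr rfl fun j _ => ?_
    by_cases h : T j ω = a <;> simp [X, h]
  have hindepX : Set.Pairwise (univ : Finset ι) fun i j => X i ⟂ᵢ[μ] X j := fun i _ j _ hij =>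
    (hindep.indepFun hij).comp (measurable_one.indicator (measurableSet_singleton a))
      (measurable_one.indicator (measurableSet_singleton a))
  rw [hcount, IndepFun.variance_sum (X := X) (fun j _ => memLp_indicator_const 2 (hmeas j) 1
    (Or.inr (measure_ne_top μ _))) hindepX]
  simp [X, variance_indicator_one (hmeas _), hr]

theorem variance_dropout_le {α : Type*} [Fintype α] [DecidableEq α] [MeasurableSpace α]
    [MeasurableSingletonClass α] {k : ℕ} (hk : 1 ≤ k) [IsProbabilityMeasure μ] {p : α → ℝ}
    (hp : ∀ i, 0 < p i) {T : Fin k → Ω → α} (hT : ∀ j, Measurable (T j))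
    (hindep : iIndepFun T μ) (hTdist : ∀ j i, μ {ω | T j ω = i} = ENNReal.ofReal (p i))
    (x w : α → ℝ) :
    Var[fun ω => ∑ i, w i * (x i * ((#{j | T j ω = i} : ℝ) / (k * p i))); μ] ≤
      (∑ i, w i ^ 2) / k * (∑ i, x i ^ 2 / p i - ∑ i, x i ^ 2) := by
  have hcount : ∀ i, MemLp (fun ω => (#{j | T j ω = i} : ℝ)) 2 μ := fun i =>
    .of_bound (measurable_card_filter_eq hT i).aestronglyMeasurable k
      (.of_forall fun ω => by
        rw [Real.norm_natCast, Nat.cast_le]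
        exact (card_filter_le _ _).trans_eq (card_fin k))
  have hY : ∀ i, MemLp (fun ω => x i * ((#{j | T j ω = i} : ℝ) / (k * p i))) 2 μ := fun i => by
    simpa only [div_eq_mul_inv] using ((hcount i).mul_const _).const_mul (x i)
  refine (variance_sum_mul_le hY w).trans_eq ?_
  have hk0 : (k : ℝ) ≠ 0 := Nat.cast_ne_zero.mpr (by omega)
  have hvar : ∀ i, Var[fun ω => x i * ((#{j | T j ω = i} : ℝ) / (k * p i)); μ] =
      (x i ^ 2 / p i - x i ^ 2) / k := by
    intro i
    have hr : ∀ j, μ.real (T j ⁻¹' {i}) = p i := fun j => by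
      rw [measureReal_def, ← ENNReal.toReal_ofReal (hp i).le, ← hTdist j i]
      rfl
    simp_rw [div_eq_mul_inv _ ((k : ℝ) * p i), variance_const_mul, variance_mul_const,
      variance_card_filter_eq hT hindep hr, Fintype.card_fin]
    have hpi := (hp i).ne'
    field_simp
  simp_rw [hvar, ← sum_div, sum_sub_distrib]
  ring

theorem integrable_sum_sq_div_sub_sum_sq {ι : Type*} [Fintype ι] {X : Ω → ι → ℝ}
    (hX : ∀ i, Integrable (fun ω => X ω i ^ 2) μ) (p : ι → ℝ) :
    Integrable (fun ω => ∑ i, X ω i ^ 2 / p i - ∑ i, X ω i ^ 2) μ :=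
  (integrable_finsetSum _ fun i _ => (hX i).div_const _).sub
    (integrable_finsetSum _ fun i _ => hX i)

theorem integral_sum_sq_div_sub_sum_sq {ι : Type*} [Fintype ι] {X : Ω → ι → ℝ}
    (hX : ∀ i, Integrable (fun ω => X ω i ^ 2) μ) (p : ι → ℝ) :
    ∫ ω, (∑ i, X ω i ^ 2 / p i - ∑ i, X ω i ^ 2) ∂μ =
      ∑ i, (∫ ω, X ω i ^ 2 ∂μ) / p i - ∫ ω, ∑ i, X ω i ^ 2 ∂μ := by
  rw [integral_sub (integrable_finsetSum _ fun i _ => (hX i).div_const _)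
    (integrable_finsetSum _ fun i _ => hX i), integral_finsetSum _ fun i _ => (hX i).div_const _]
  simp_rw [integral_div]

end Variance

theorem approx_regularizer_relaxed_bound_general {d k : ℕ} (hk : 1 ≤ k)
    {Ω : Type*} [MeasurableSpace Ω] (μ : Measure Ω) [IsProbabilityMeasure μ]
    {Ω' : Type*} [MeasurableSpace Ω'] (ν : Measure Ω') [IsProbabilityMeasure ν]
    (X : Ω → Fin d → ℝ)
    (hXint : ∀ i, Integrable (fun ω => (X ω i) ^ 2) μ)
    (p : Fin d → ℝ) (hp : ∀ i, 0 < p i)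
    (T : Fin k → Ω' → Fin d) (hTmeas : ∀ j, Measurable (T j))
    (hTindep : iIndepFun T ν)
    (hTdist : ∀ j i, ν {ω' | T j ω' = i} = ENNReal.ofReal (p i))
    (m : Fin d → Ω' → ℕ)
    (hm : ∀ i ω', m i ω' = (Finset.univ.filter (fun j => T j ω' = i)).card)
    -- `Varε x w` is the variance over the dropout noise of `wᵀ(x∘ε)` for fixed `x`
    (Varε : (Fin d → ℝ) → (Fin d → ℝ) → ℝ)
    (hVar : ∀ x w, Varε x w =
      ∫ ω', (∑ i, w i * (x i * ((m i ω' : ℝ) / (k * p i))) -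
        ∫ ω'', ∑ i, w i * (x i * ((m i ω'' : ℝ) / (k * p i))) ∂ν) ^ 2 ∂ν)
    -- `q(z) = 1/(1+exp(-z/2))`
    (q : ℝ → ℝ) (hq : ∀ z, q z = 1 / (1 + Real.exp (-z / 2)))
    -- the approximate dropout regularizer
    (Rhat : (Fin d → ℝ) → ℝ)
    (hRhat : ∀ w, Rhat w =
      (1 / 2) * ∫ ω, q (∑ i, w i * X ω i) * (1 - q (∑ i, w i * X ω i)) * Varε (X ω) w ∂μ) :
    ∀ w : Fin d → ℝ, Rhat w ≤
      (1 / (8 * k)) * (∑ i, w i ^ 2) *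
        (∑ i, (∫ ω, (X ω i) ^ 2 ∂μ) / p i - ∫ ω, ∑ i, (X ω i) ^ 2 ∂μ) := by
  intro w
  simp only [hm] at hVar
  have hVarε : ∀ x, Varε x w =
      Var[fun ω' => ∑ i, w i * (x i * ((#{j | T j ω' = i} : ℝ) / (k * p i))); ν] := fun x => by
    have hmeas : Measurable fun ω' => ∑ i, w i * (x i * ((#{j | T j ω' = i} : ℝ) / (k * p i))) :=
      Finset.measurable_sum _ fun i _ =>
        (((measurable_card_filter_eq hTmeas i).div_const _).const_mul _).const_mul _
    rw [hVar, variance_eq_integral hmeas.aemeasurable]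
  have hq_Icc : ∀ z, q z * (1 - q z) ∈ Set.Icc 0 (1 / 4) := fun z => by
    rw [show q z = Real.sigmoid (z / 2) by rw [hq, Real.sigmoid_def, one_div, neg_div]]
    exact Real.sigmoid_mul_one_sub_sigmoid_mem_Icc _
  have hbound : ∀ ω, q (∑ i, w i * X ω i) * (1 - q (∑ i, w i * X ω i)) * Varε (X ω) w ≤
      1 / 4 * ((∑ i, w i ^ 2) / k * (∑ i, X ω i ^ 2 / p i - ∑ i, X ω i ^ 2)) := fun ω => by
    rw [hVarε]
    exact mul_le_mul (hq_Icc _).2 (variance_dropout_le hk hp hTmeas hTindep hTdist _ w)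
      (variance_nonneg _ _) (by norm_num)
  rw [hRhat]
  calc (1 / 2) * ∫ ω, q (∑ i, w i * X ω i) * (1 - q (∑ i, w i * X ω i)) * Varε (X ω) w ∂μ
      ≤ (1 / 2) * ∫ ω, 1 / 4 * ((∑ i, w i ^ 2) / k *
          (∑ i, X ω i ^ 2 / p i - ∑ i, X ω i ^ 2)) ∂μ :=
        mul_le_mul_of_nonneg_left (integral_mono_of_nonneg
          (.of_forall fun ω => mul_nonneg (hq_Icc _).1 (hVarε _ ▸ variance_nonneg _ _))
          (((integrable_sum_sq_div_sub_sum_sq hXint p).const_mul _).const_mul _)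
          (.of_forall hbound)) (by norm_num)
    _ = _ := by
        rw [integral_const_mul, integral_const_mul, integral_sum_sq_div_sub_sum_sq hXint]
        ring

/-- relaxed upper bound on the approximate dropout regularizer
`R̂(w) = (1/2) E_x[q(wᵀx)(1-q(wᵀx)) Var_ε(wᵀ(x∘ε))]` for multinomial dropout noise:
`R̂(w) ≤ (1/(8k)) ‖w‖₂² (Σ_i E[x i ^ 2]/p i - E[‖x‖₂²])`. -/
theorem approx_regularizer_relaxed_bound {d k : ℕ} (hk : 1 ≤ k)
    {Ω : Type*} [MeasurableSpace Ω] (μ : Measure Ω) [IsProbabilityMeasure μ]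
    {Ω' : Type*} [MeasurableSpace Ω'] (ν : Measure Ω') [IsProbabilityMeasure ν]
    (X : Ω → Fin d → ℝ) (hXmeas : Measurable X)
    (hXint : ∀ i, Integrable (fun ω => (X ω i) ^ 2) μ)
    (p : Fin d → ℝ) (hp : ∀ i, 0 < p i) (hpsum : ∑ i, p i = 1)
    (T : Fin k → Ω' → Fin d) (hTmeas : ∀ j, Measurable (T j))
    (hTindep : iIndepFun T ν)
    (hTdist : ∀ j i, ν {ω' | T j ω' = i} = ENNReal.ofReal (p i))
    (m : Fin d → Ω' → ℕ)
    (hm : ∀ i ω', m i ω' = (Finset.univ.filter (fun j => T j ω' = i)).card)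
    -- `Varε x w` is the variance over the dropout noise of `wᵀ(x∘ε)` for fixed `x`
    (Varε : (Fin d → ℝ) → (Fin d → ℝ) → ℝ)
    (hVar : ∀ x w, Varε x w =
      ∫ ω', (∑ i, w i * (x i * ((m i ω' : ℝ) / (k * p i))) -
        ∫ ω'', ∑ i, w i * (x i * ((m i ω'' : ℝ) / (k * p i))) ∂ν) ^ 2 ∂ν)
    -- `q(z) = 1/(1+exp(-z/2))`
    (q : ℝ → ℝ) (hq : ∀ z, q z = 1 / (1 + Real.exp (-z / 2)))
    -- the approximate dropout regularizer
    (Rhat : (Fin d → ℝ) → ℝ)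
    (hRhat : ∀ w, Rhat w =
      (1 / 2) * ∫ ω, q (∑ i, w i * X ω i) * (1 - q (∑ i, w i * X ω i)) * Varε (X ω) w ∂μ)
    (hRint : ∀ w : Fin d → ℝ, Integrable
      (fun ω => q (∑ i, w i * X ω i) * (1 - q (∑ i, w i * X ω i)) * Varε (X ω) w) μ) :
    ∀ w : Fin d → ℝ, Rhat w ≤
      (1 / (8 * k)) * (∑ i, w i ^ 2) *
        (∑ i, (∫ ω, (X ω i) ^ 2 ∂μ) / p i - ∫ ω, ∑ i, (X ω i) ^ 2 ∂μ) :=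
  approx_regularizer_relaxed_bound_general hk μ ν X hXint p hp T hTmeas hTindep hTdist m hm Varε
    hVar q hq Rhat hRhat
end

section
/- Let x ∈ ℝ^d be a random vector with E[x_i²] < ∞ for every i, let ε be the multinomial dropout noise with parameters (p_1,…,p_d; k) independent of x, and let q(z) = 1/(1 + exp(−z/2)). Define the approximate dropout regularizer R̂(w) = (1/2)·E_x[ q(wᵀx)(1 − q(wᵀx)) · Var_ε(wᵀ(x∘ε)) ]. Then for every w ∈ ℝ^d, R̂(w) ≤ (1/(8k))·( Σ_{i=1}^d w_i² E[x_i²]/p_i − E[(wᵀx)²] ). -/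
/-!
Writing `m i` as the number of the `k` i.i.d. categorical trials `T j` that land in `i`, the noisy
score `wᵀ(x ∘ ε)` is the sum `∑ j, g (T j)` with `g i = w i x i / (k p i)`. Its variance is
therefore `k` times the variance of a single `g (T j)`, namely `(1/k) (∑ w i² x i² / p i - (wᵀx)²)`.
Since `q` takes values in `[0, 1]`, the weight `q (1 - q)` lies in `[0, 1/4]`, and integrating
over `x` gives the bound.
-/

open MeasureTheory ProbabilityTheory Finset

lemma Finset.sum_card_fiber_mul {ι κ R : Type*} [Fintype ι] [Fintype κ] [DecidableEq κ]
    [CommSemiring R] (f : ι → κ) (c : κ → R) :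
    ∑ i, (#{j | f j = i} : R) * c i = ∑ j, c (f j) := by
  rw [← sum_fiberwise' univ f c]
  simp [sum_const, nsmul_eq_mul]

section CategoricalLaw

variable {Ω α : Type*} [MeasurableSpace Ω] {ν : Measure Ω}
  [Fintype α] [MeasurableSpace α] [DiscreteMeasurableSpace α] {p : α → ℝ}

lemma integral_comp_eq_sum_mul [IsFiniteMeasure ν] {T : Ω → α} (hT : Measurable T)
    (hp : ∀ i, 0 ≤ p i) (hTlaw : ∀ i, ν {ω | T ω = i} = ENNReal.ofReal (p i)) (g : α → ℝ) :
    ∫ ω, g (T ω) ∂ν = ∑ i, p i * g i := by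
  rw [← integral_map hT.aemeasurable .of_discrete, integral_fintype .of_finite]
  refine sum_congr rfl fun i _ => ?_
  rw [measureReal_def, Measure.map_apply hT (measurableSet_singleton i)]
  simp [Set.preimage, hTlaw, hp i]

lemma variance_comp_eq_sum [IsProbabilityMeasure ν] {T : Ω → α} (hT : Measurable T)
    (hp : ∀ i, 0 ≤ p i) (hTlaw : ∀ i, ν {ω | T ω = i} = ENNReal.ofReal (p i)) (g : α → ℝ) :
    Var[fun ω => g (T ω); ν] = ∑ i, p i * g i ^ 2 - (∑ i, p i * g i) ^ 2 := by
  have hg : MemLp (fun ω => g (T ω)) 2 ν := MemLp.of_discrete.comp_of_map hT.aemeasurable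
  rw [variance_eq_sub hg]
  simp only [Pi.pow_apply]
  rw [integral_comp_eq_sum_mul hT hp hTlaw, integral_comp_eq_sum_mul hT hp hTlaw (g · ^ 2)]

lemma variance_sum_comp_iid [IsProbabilityMeasure ν] {ι : Type*} [Fintype ι] {T : ι → Ω → α}
    (hT : ∀ j, Measurable (T j)) (hindep : iIndepFun T ν) (hp : ∀ i, 0 ≤ p i)
    (hTlaw : ∀ j i, ν {ω | T j ω = i} = ENNReal.ofReal (p i)) (g : α → ℝ) :
    Var[fun ω => ∑ j, g (T j ω); ν] =
      Fintype.card ι * (∑ i, p i * g i ^ 2 - (∑ i, p i * g i) ^ 2) := by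
  have hsum : (fun ω => ∑ j, g (T j ω)) = ∑ j, fun ω => g (T j ω) := by
    ext ω; simp
  have hg : ∀ j, MemLp (fun ω => g (T j ω)) 2 ν := fun j =>
    MemLp.of_discrete.comp_of_map (hT j).aemeasurable
  rw [hsum, IndepFun.variance_sum (fun j _ => hg j) fun j _ j' _ hne =>
    (hindep.indepFun hne).comp (φ := g) (ψ := g) .of_discrete .of_discrete]
  simp only [variance_comp_eq_sum (hT _) hp (hTlaw _), sum_const, card_univ, nsmul_eq_mul]

end CategoricalLaw

theorem multinomial_dropout_variance {Ω : Type*} [MeasurableSpace Ω] {ν : Measure Ω}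
    [IsProbabilityMeasure ν] {d k : ℕ} {p : Fin d → ℝ} (hp : ∀ i, 0 < p i)
    {T : Fin k → Ω → Fin d} (hT : ∀ j, Measurable (T j)) (hindep : iIndepFun T ν)
    (hTlaw : ∀ j i, ν {ω | T j ω = i} = ENNReal.ofReal (p i))
    (m : Fin d → Ω → ℕ) (hm : ∀ i ω, m i ω = #{j | T j ω = i}) (x w : Fin d → ℝ) :
    ∫ ω, (∑ i, w i * (x i * ((m i ω : ℝ) / (k * p i))) -
        ∫ ω', ∑ i, w i * (x i * ((m i ω' : ℝ) / (k * p i))) ∂ν) ^ 2 ∂ν =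
      (1 / k) * (∑ i, w i ^ 2 * x i ^ 2 / p i - (∑ i, w i * x i) ^ 2) := by
  obtain rfl | hk := eq_or_ne k 0
  · simp -- no trials: both sides vanish, the right one because `1 / 0 = 0`
  have hk' : (k : ℝ) ≠ 0 := Nat.cast_ne_zero.2 hk
  set g : Fin d → ℝ := fun i => w i * x i / (k * p i)
  have hS : ∀ ω, ∑ i, w i * (x i * ((m i ω : ℝ) / (k * p i))) = ∑ j, g (T j ω) := by
    intro ω
    rw [← sum_card_fiber_mul]
    refine sum_congr rfl fun i _ => ?_
    rw [hm]
    ring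
  have hmean : ∑ i, p i * g i = (∑ i, w i * x i) / k := by
    rw [sum_div]
    exact sum_congr rfl fun i _ => by dsimp only [g]; field_simp [(hp i).ne']
  have hsecond : ∑ i, p i * g i ^ 2 = (∑ i, w i ^ 2 * x i ^ 2 / p i) / k ^ 2 := by
    rw [sum_div]
    exact sum_congr rfl fun i _ => by dsimp only [g]; field_simp [(hp i).ne']
  simp only [hS]
  rw [← variance_eq_integral (by fun_prop),
    variance_sum_comp_iid hT hindep (fun i => (hp i).le) hTlaw, hmean, hsecond, Fintype.card_fin]
  field_simp

section Quadratic

variable {Ω ι : Type*} [MeasurableSpace Ω] {μ : Measure Ω} [Fintype ι] {X : Ω → ι → ℝ}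

lemma integrable_sum_mul_sq (hX : ∀ i, MemLp (fun ω => X ω i) 2 μ) (w : ι → ℝ) :
    Integrable (fun ω => (∑ i, w i * X ω i) ^ 2) μ :=
  (memLp_finsetSum _ fun i _ => (hX i).const_mul (w i)).integrable_sq

lemma integrable_sum_sq_div (hX : ∀ i, MemLp (fun ω => X ω i) 2 μ) (w p : ι → ℝ) :
    Integrable (fun ω => ∑ i, w i ^ 2 * X ω i ^ 2 / p i) μ :=
  integrable_finsetSum _ fun i _ => ((hX i).integrable_sq.const_mul _).div_const _

lemma integral_sum_sq_div_sub_sq_sum (hX : ∀ i, MemLp (fun ω => X ω i) 2 μ) (w p : ι → ℝ) :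
    ∫ ω, (∑ i, w i ^ 2 * X ω i ^ 2 / p i - (∑ i, w i * X ω i) ^ 2) ∂μ =
      ∑ i, w i ^ 2 * (∫ ω, X ω i ^ 2 ∂μ) / p i - ∫ ω, (∑ i, w i * X ω i) ^ 2 ∂μ := by
  rw [integral_sub (integrable_sum_sq_div hX w p) (integrable_sum_mul_sq hX w),
    integral_finsetSum _ fun i _ => ((hX i).integrable_sq.const_mul _).div_const _]
  simp only [integral_div, integral_const_mul]

end Quadratic

theorem approx_regularizer_tight_bound_general {d k : ℕ}
    {Ω : Type*} [MeasurableSpace Ω] (μ : Measure Ω) [IsProbabilityMeasure μ]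
    {Ω' : Type*} [MeasurableSpace Ω'] (ν : Measure Ω') [IsProbabilityMeasure ν]
    (X : Ω → Fin d → ℝ) (hXmeas : Measurable X)
    (hXint : ∀ i, Integrable (fun ω => (X ω i) ^ 2) μ)
    (p : Fin d → ℝ) (hp : ∀ i, 0 < p i)
    (T : Fin k → Ω' → Fin d) (hTmeas : ∀ j, Measurable (T j))
    (hTindep : iIndepFun T ν)
    (hTdist : ∀ j i, ν {ω' | T j ω' = i} = ENNReal.ofReal (p i))
    (m : Fin d → Ω' → ℕ)
    (hm : ∀ i ω', m i ω' = (Finset.univ.filter (fun j => T j ω' = i)).card)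
    -- `Varε x w` is the variance over the dropout noise of `wᵀ(x∘ε)` for fixed `x`
    (Varε : (Fin d → ℝ) → (Fin d → ℝ) → ℝ)
    (hVar : ∀ x w, Varε x w =
      ∫ ω', (∑ i, w i * (x i * ((m i ω' : ℝ) / (k * p i))) -
        ∫ ω'', ∑ i, w i * (x i * ((m i ω'' : ℝ) / (k * p i))) ∂ν) ^ 2 ∂ν)
    -- `q(z) = 1/(1+exp(-z/2))`
    (q : ℝ → ℝ) (hq : ∀ z, q z = 1 / (1 + Real.exp (-z / 2)))
    -- the approximate dropout regularizer
    (Rhat : (Fin d → ℝ) → ℝ)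
    (hRhat : ∀ w, Rhat w =
      (1 / 2) * ∫ ω, q (∑ i, w i * X ω i) * (1 - q (∑ i, w i * X ω i)) * Varε (X ω) w ∂μ) :
    ∀ w : Fin d → ℝ, Rhat w ≤
      (1 / (8 * k)) *
        (∑ i, w i ^ 2 * (∫ ω, (X ω i) ^ 2 ∂μ) / p i - ∫ ω, (∑ i, w i * X ω i) ^ 2 ∂μ) := by
  intro w
  have hXL2 : ∀ i, MemLp (fun ω => X ω i) 2 μ := fun i =>
    (memLp_two_iff_integrable_sq (by fun_prop)).2 (hXint i)
  have hVarε : ∀ x, Varε x w = (1 / k) * (∑ i, w i ^ 2 * x i ^ 2 / p i - (∑ i, w i * x i) ^ 2) :=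
    fun x => (hVar x w).trans (multinomial_dropout_variance hp hTmeas hTindep hTdist m hm x w)
  have hVarε_nonneg : ∀ x, 0 ≤ Varε x w := fun x => by
    rw [hVar]
    exact integral_nonneg fun _ => sq_nonneg _
  have hq_weight : ∀ z, 0 ≤ q z * (1 - q z) ∧ q z * (1 - q z) ≤ 1 / 4 := fun z => by
    have hσ : q z = Real.sigmoid (z / 2) := by rw [hq, Real.sigmoid_def, one_div, neg_div]
    refine ⟨mul_nonneg (hσ ▸ Real.sigmoid_nonneg _) (sub_nonneg.2 (hσ ▸ Real.sigmoid_le_one _)), ?_⟩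
    nlinarith [sq_nonneg (q z - 1 / 2)]
  have hVarε_int : Integrable (fun ω => Varε (X ω) w) μ := by
    simp only [hVarε]
    exact ((integrable_sum_sq_div hXL2 w p).sub (integrable_sum_mul_sq hXL2 w)).const_mul _
  calc Rhat w ≤ 1 / 2 * ∫ ω, 1 / 4 * Varε (X ω) w ∂μ := by
        rw [hRhat]
        refine mul_le_mul_of_nonneg_left (integral_mono_of_nonneg
          (.of_forall fun ω => mul_nonneg (hq_weight _).1 (hVarε_nonneg _))
          (hVarε_int.const_mul _)
          (.of_forall fun ω => mul_le_mul_of_nonneg_right (hq_weight _).2 (hVarε_nonneg _)))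
          (by norm_num)
    _ = _ := by
        simp only [hVarε]
        rw [integral_const_mul, integral_const_mul, integral_sum_sq_div_sub_sq_sum hXL2]
        ring

/-- tight upper bound on the approximate dropout regularizer
`R̂(w) = (1/2) E_x[q(wᵀx)(1-q(wᵀx)) Var_ε(wᵀ(x∘ε))]` for multinomial dropout noise:
`R̂(w) ≤ (1/(8k)) (Σ_i w i ^ 2 E[x i ^ 2]/p i - E[(wᵀx)²])`. -/
theorem approx_regularizer_tight_bound {d k : ℕ} (hk : 1 ≤ k)
    {Ω : Type*} [MeasurableSpace Ω] (μ : Measure Ω) [IsProbabilityMeasure μ]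
    {Ω' : Type*} [MeasurableSpace Ω'] (ν : Measure Ω') [IsProbabilityMeasure ν]
    (X : Ω → Fin d → ℝ) (hXmeas : Measurable X)
    (hXint : ∀ i, Integrable (fun ω => (X ω i) ^ 2) μ)
    (p : Fin d → ℝ) (hp : ∀ i, 0 < p i) (hpsum : ∑ i, p i = 1)
    (T : Fin k → Ω' → Fin d) (hTmeas : ∀ j, Measurable (T j))
    (hTindep : iIndepFun T ν)
    (hTdist : ∀ j i, ν {ω' | T j ω' = i} = ENNReal.ofReal (p i))
    (m : Fin d → Ω' → ℕ)
    (hm : ∀ i ω', m i ω' = (Finset.univ.filter (fun j => T j ω' = i)).card)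
    -- `Varε x w` is the variance over the dropout noise of `wᵀ(x∘ε)` for fixed `x`
    (Varε : (Fin d → ℝ) → (Fin d → ℝ) → ℝ)
    (hVar : ∀ x w, Varε x w =
      ∫ ω', (∑ i, w i * (x i * ((m i ω' : ℝ) / (k * p i))) -
        ∫ ω'', ∑ i, w i * (x i * ((m i ω'' : ℝ) / (k * p i))) ∂ν) ^ 2 ∂ν)
    -- `q(z) = 1/(1+exp(-z/2))`
    (q : ℝ → ℝ) (hq : ∀ z, q z = 1 / (1 + Real.exp (-z / 2)))
    -- the approximate dropout regularizer
    (Rhat : (Fin d → ℝ) → ℝ)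
    (hRhat : ∀ w, Rhat w =
      (1 / 2) * ∫ ω, q (∑ i, w i * X ω i) * (1 - q (∑ i, w i * X ω i)) * Varε (X ω) w ∂μ)
    (hRint : ∀ w : Fin d → ℝ, Integrable
      (fun ω => q (∑ i, w i * X ω i) * (1 - q (∑ i, w i * X ω i)) * Varε (X ω) w) μ) :
    ∀ w : Fin d → ℝ, Rhat w ≤
      (1 / (8 * k)) *
        (∑ i, w i ^ 2 * (∫ ω, (X ω i) ^ 2 ∂μ) / p i - ∫ ω, (∑ i, w i * X ω i) ^ 2 ∂μ) :=
  approx_regularizer_tight_bound_general μ ν X hXmeas hXint p hp T hTmeas hTindep hTdist m hm Varε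
    hVar q hq Rhat hRhat
end
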